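/- arXiv:2412.17962 — 2 statements merged into one kernel-verified Lean document; each statement's English description precedes it below -/
import Mathlib

section
/- A graph G on n vertices is a uniquely C4+-saturated graph with girth 4 if and only if G is a strongly regular graph with parameters (n, k, 0, 2) for some k. -/
/-!
In a triangle-free graph `G`, every triangle of `G + uv` contains the new edge `uv`; since the two
triangles of a diamond share only its chord, the copies of `C₄⁺` in `G + uv` are exactly the
diamonds with chord `uv` whose two remaining vertices are common neighbours of `u` and `v`. Hence a
triangle-free `G` is uniquely `C₄⁺`-saturated iff every non-adjacent pair has exactly two common
neighbours. Girth `4` gives triangle-freeness, and conversely two common neighbours of a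
non-adjacent pair span a `4`-cycle.

Such a graph is regular: for an edge `pq`, each neighbour of `p` other than `q` has exactly one
neighbour among the neighbours of `q` other than `p`, and vice versa, so double counting gives
`deg p = deg q`; any two non-adjacent vertices have a common neighbour.
-/

open SimpleGraph

/-- The diamond graph `C₄⁺`: a `4`-cycle with one chord, i.e. `K₄` minus an edge. -/
def diamond : SimpleGraph (Fin 4) := (⊤ : SimpleGraph (Fin 4)).deleteEdges {s(0, 1)}

/-- `G'` is a copy of `H` in `G`, i.e. a subgraph of `G` isomorphic to `H`. -/
def IsCopy {W V : Type*} (H : SimpleGraph W) {G : SimpleGraph V} (G' : G.Subgraph) : Prop :=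
  Nonempty (G'.coe ≃g H)

/-- `G` is uniquely `H`-saturated: `G` is `H`-free, and adding any non-edge
creates exactly one copy of `H`. -/
def UniquelySaturated {W V : Type*} (H : SimpleGraph W) (G : SimpleGraph V) : Prop :=
  (∀ G' : G.Subgraph, ¬ IsCopy H G') ∧
    ∀ u v : V, u ≠ v → ¬ G.Adj u v →
      ∃! G' : (G ⊔ SimpleGraph.fromEdgeSet {s(u, v)}).Subgraph, IsCopy H G'

namespace SimpleGraph

section

variable {V : Type*} {G : SimpleGraph V}

lemma CliqueFree.not_adj_of_adj_of_adj (hG : G.CliqueFree 3) {a b c : V} (hab : G.Adj a b)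
    (hac : G.Adj a c) : ¬G.Adj b c := by
  classical
  exact fun hbc ↦ hG {a, b, c} (is3Clique_triple_iff.mpr ⟨hab, hac, hbc⟩)

lemma cliqueFree_three_of_four_le_girth (h : 4 ≤ G.girth) : G.CliqueFree 3 := by
  by_contra hG
  have hK : (completeGraph (Fin 3)).girth = 3 := girth_top (by simp)
  have := ((not_cliqueFree_iff_top_isContained 3).mp hG).girth_le
    (by rw [← girth_eq_zero, hK]; decide)
  omega

lemma four_le_length_of_isCycle (hG : G.CliqueFree 3) {a : V} {w : G.Walk a a}
    (hw : w.IsCycle) : 4 ≤ w.length := by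
  by_contra! h
  have h3 : w.length = 3 := le_antisymm (by omega) hw.three_le_length
  have h01 := w.adj_getVert_succ (i := 0) (by omega)
  have h12 := w.adj_getVert_succ (i := 1) (by omega)
  have h20 := w.adj_getVert_succ (i := 2) (by omega)
  rw [Walk.getVert_zero] at h01
  rw [show 2 + 1 = w.length by omega, Walk.getVert_length] at h20
  exact hG.not_adj_of_adj_of_adj h01.symm h12 h20.symm

lemma girth_eq_four (hG : G.CliqueFree 3) {a : V} {w : G.Walk a a} (hw : w.IsCycle)
    (hl : w.length = 4) : G.girth = 4 := by
  obtain ⟨b, w', hw', hg⟩ := exists_girth_eq_length.mpr fun hacyc ↦ hacyc w hw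
  have := girth_le_length hw
  have := four_le_length_of_isCycle hG hw'
  omega

lemma exists_isCycle_length_four {u v x y : V} (hux : G.Adj u x) (hxv : G.Adj x v)
    (hvy : G.Adj v y) (hyu : G.Adj y u) (huv : u ≠ v) (hxy : x ≠ y) :
    ∃ w : G.Walk u u, w.IsCycle ∧ w.length = 4 := by
  refine ⟨.cons hux (.cons hxv (.cons hvy (.cons hyu .nil))), ?_, rfl⟩
  have := hux.ne; have := hxv.ne; have := hvy.ne; have := hyu.ne
  exact { edges_nodup := by aesop, ne_nil := by aesop, support_nodup := by aesop }

lemma ne_top_of_cliqueFree_three (hG : G.CliqueFree 3) (hcyc : ¬G.IsAcyclic) : G ≠ ⊤ := by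
  rintro rfl
  obtain ⟨a, w, hw⟩ : ∃ (a : V) (w : Walk ⊤ a a), w.IsCycle := by
    simpa [IsAcyclic] using hcyc
  have := hw.three_le_length
  exact hG.not_adj_of_adj_of_adj (w.adj_getVert_succ (i := 0) (by omega)).symm
    (w.adj_getVert_succ (i := 1) (by omega))
    (by simpa using hw.getVert_sub_one_ne_getVert_add_one (i := 1) (by omega))

lemma isCopy_iff_exists_copy {W : Type*} {H : SimpleGraph W} (G' : G.Subgraph) :
    IsCopy H G' ↔ ∃ f : Copy H G, f.toSubgraph = G' := by
  rw [← Set.mem_range, Copy.range_toSubgraph]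
  exact ⟨fun ⟨e⟩ ↦ ⟨e.symm⟩, fun ⟨e⟩ ↦ ⟨e.symm⟩⟩

lemma Copy.sym2_eq_iff {W : Type*} {H : SimpleGraph W} (f : Copy H G) {i j k l : W} :
    s(f i, f j) = s(f k, f l) ↔ s(i, j) = s(k, l) := by
  simpa using (Sym2.map.injective f.injective).eq_iff (a := s(i, j)) (b := s(k, l))

lemma diamond_adj_iff {i j : Fin 4} : diamond.Adj i j ↔ i ≠ j ∧ s(i, j) ≠ s(0, 1) := by
  simp [diamond]

-- `e₁` is the non-edge and `e₂` the chord of the diamond.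
def diamondSubgraph (G : SimpleGraph V) (e₁ e₂ : Sym2 V) : G.Subgraph :=
  ((⊤ : G.Subgraph).induce {z | z ∈ e₁ ∨ z ∈ e₂}).deleteEdges {e₁}

lemma Copy.toSubgraph_diamond (f : Copy diamond G) :
    f.toSubgraph = G.diamondSubgraph s(f 0, f 1) s(f 2, f 3) := by
  have hrange (z : V) : z ∈ Set.range f ↔ z ∈ s(f 0, f 1) ∨ z ∈ s(f 2, f 3) := by
    simp only [Set.mem_range, Fin.exists_fin_succ, Sym2.mem_iff]
    grind
  ext a b
  · simpa [diamondSubgraph] using hrange a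
  · simp only [diamondSubgraph, Subgraph.map_adj, Subgraph.top_adj, Relation.Map,
      Subgraph.deleteEdges_adj, Subgraph.induce_adj, Set.mem_ofPred_eq, ← hrange,
      Set.mem_singleton_iff]
    constructor
    · rintro ⟨i, j, hij, rfl, rfl⟩
      exact ⟨⟨⟨i, rfl⟩, ⟨j, rfl⟩, f.toHom.map_adj hij⟩,
        f.sym2_eq_iff.not.mpr (diamond_adj_iff.mp hij).2⟩
    · rintro ⟨⟨⟨i, rfl⟩, ⟨j, rfl⟩, hij⟩, hne⟩
      exact ⟨i, j, diamond_adj_iff.mpr ⟨fun h ↦ hij.ne (h ▸ rfl), f.sym2_eq_iff.not.mp hne⟩,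
        rfl, rfl⟩

lemma isCopy_diamondSubgraph {a b c d : V} (hab : a ≠ b) (hac : G.Adj a c) (had : G.Adj a d)
    (hbc : G.Adj b c) (hbd : G.Adj b d) (hcd : G.Adj c d) :
    IsCopy diamond (G.diamondSubgraph s(a, b) s(c, d)) := by
  have hom : ∀ {i j : Fin 4}, diamond.Adj i j → G.Adj (![a, b, c, d] i) (![a, b, c, d] j) := by
    intro i j hij
    fin_cases i <;> fin_cases j <;> simp_all [diamond_adj_iff, adj_comm]
  have inj : Function.Injective ![a, b, c, d] := by
    have := hac.ne; have := had.ne; have := hbc.ne; have := hbd.ne; have := hcd.ne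
    intro i j hij
    fin_cases i <;> fin_cases j <;> simp_all [eq_comm]
  rw [isCopy_iff_exists_copy]
  exact ⟨⟨⟨_, hom⟩, inj⟩, Copy.toSubgraph_diamond _⟩

lemma CliqueFree.not_isCopy_diamond (hG : G.CliqueFree 3) (G' : G.Subgraph) :
    ¬IsCopy diamond G' := by
  rw [isCopy_iff_exists_copy]
  rintro ⟨f, -⟩
  have (i j : Fin 4) (h : diamond.Adj i j := by simp [diamond_adj_iff]) : G.Adj (f i) (f j) :=
    f.toHom.map_adj h
  exact hG.not_adj_of_adj_of_adj (this 2 0) (this 2 3) (this 0 3)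

lemma commonNeighbors_eq_of_sym2_eq {a b c d : V} (h : s(a, b) = s(c, d)) :
    G.commonNeighbors a b = G.commonNeighbors c d := by
  rcases Sym2.eq_iff.mp h with ⟨rfl, rfl⟩ | ⟨rfl, rfl⟩
  · rfl
  · exact commonNeighbors_symm G a b

variable {u v : V}

lemma adj_of_adj_sup_edge {a b : V} (h : (G ⊔ fromEdgeSet {s(u, v)}).Adj a b)
    (hne : s(a, b) ≠ s(u, v)) : G.Adj a b := by
  simpa [hne] using h

lemma CliqueFree.eq_or_eq_or_eq_of_adj_sup_edge (hG : G.CliqueFree 3) {a b c : V}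
    (hab : (G ⊔ fromEdgeSet {s(u, v)}).Adj a b) (hac : (G ⊔ fromEdgeSet {s(u, v)}).Adj a c)
    (hbc : (G ⊔ fromEdgeSet {s(u, v)}).Adj b c) :
    s(a, b) = s(u, v) ∨ s(a, c) = s(u, v) ∨ s(b, c) = s(u, v) := by
  by_contra! h
  exact hG.not_adj_of_adj_of_adj (adj_of_adj_sup_edge hab h.1) (adj_of_adj_sup_edge hac h.2.1)
    (adj_of_adj_sup_edge hbc h.2.2)

lemma CliqueFree.copy_diamond_sup_edge (hG : G.CliqueFree 3)
    (f : Copy diamond (G ⊔ fromEdgeSet {s(u, v)})) :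
    s(f 2, f 3) = s(u, v) ∧ f 0 ∈ G.commonNeighbors u v ∧ f 1 ∈ G.commonNeighbors u v := by
  have hadj (i j : Fin 4) (h : diamond.Adj i j := by simp [diamond_adj_iff]) :
      (G ⊔ fromEdgeSet {s(u, v)}).Adj (f i) (f j) :=
    f.toHom.map_adj h
  -- both triangles of the diamond must use the new edge, so it is their common edge
  have h23 : s(f 2, f 3) = s(u, v) := by
    by_contra hne
    rcases hG.eq_or_eq_or_eq_of_adj_sup_edge (hadj 2 3) (hadj 2 0) (hadj 3 0) with h | h | h <;>
    rcases hG.eq_or_eq_or_eq_of_adj_sup_edge (hadj 2 3) (hadj 2 1) (hadj 3 1) with h' | h' | h' <;>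
    first
      | exact hne ‹_›
      | exact absurd (f.sym2_eq_iff.mp (h.trans h'.symm)) (by decide)
  have hmem (i : Fin 4) (hi : i = 0 ∨ i = 1) : f i ∈ G.commonNeighbors u v := by
    have hne (j : Fin 4) (hj : j = 2 ∨ j = 3) : s(f j, f i) ≠ s(u, v) := by
      intro h
      have := f.sym2_eq_iff.mp (h.trans h23.symm)
      rcases hi with rfl | rfl <;> rcases hj with rfl | rfl <;> revert this <;> decide
    rw [← commonNeighbors_eq_of_sym2_eq h23, mem_commonNeighbors]
    rcases hi with rfl | rfl <;>
      exact ⟨adj_of_adj_sup_edge (hadj _ _) (hne 2 (by simp)),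
        adj_of_adj_sup_edge (hadj _ _) (hne 3 (by simp))⟩
  exact ⟨h23, hmem 0 (by simp), hmem 1 (by simp)⟩

lemma CliqueFree.isCopy_diamond_sup_edge_iff (hG : G.CliqueFree 3) (huv : u ≠ v)
    (G' : (G ⊔ fromEdgeSet {s(u, v)}).Subgraph) :
    IsCopy diamond G' ↔ ∃ x y, x ≠ y ∧ x ∈ G.commonNeighbors u v ∧ y ∈ G.commonNeighbors u v ∧
      G' = (G ⊔ fromEdgeSet {s(u, v)}).diamondSubgraph s(x, y) s(u, v) := by
  constructor
  · rw [isCopy_iff_exists_copy]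
    rintro ⟨f, rfl⟩
    obtain ⟨h23, h0, h1⟩ := hG.copy_diamond_sup_edge f
    exact ⟨f 0, f 1, f.injective.ne (by decide), h0, h1, by rw [f.toSubgraph_diamond, h23]⟩
  · rintro ⟨x, y, hxy, hx, hy, rfl⟩
    rw [mem_commonNeighbors] at hx hy
    exact isCopy_diamondSubgraph hxy (.inl hx.1.symm) (.inl hx.2.symm) (.inl hy.1.symm)
      (.inl hy.2.symm) (by simp [huv])

theorem CliqueFree.existsUnique_isCopy_diamond_sup_edge_iff (hG : G.CliqueFree 3)
    (huv : u ≠ v) :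
    (∃! G' : (G ⊔ fromEdgeSet {s(u, v)}).Subgraph, IsCopy diamond G') ↔
      (G.commonNeighbors u v).ncard = 2 := by
  simp only [hG.isCopy_diamond_sup_edge_iff huv, Set.ncard_eq_two]
  constructor
  · rintro ⟨-, ⟨x, y, hxy, hx, hy, rfl⟩, huniq⟩
    refine ⟨x, y, hxy, Set.Subset.antisymm (fun z hz ↦ ?_)
      (by simp [Set.insert_subset_iff, hx, hy])⟩
    by_cases hzx : z = x
    · simp [hzx]
    have hverts := congrArg Subgraph.verts (huniq _ ⟨x, z, Ne.symm hzx, hx, hz, rfl⟩)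
    have hz' : z ∈ ((G ⊔ fromEdgeSet {s(u, v)}).diamondSubgraph s(x, y) s(u, v)).verts := by
      rw [← hverts]; simp [diamondSubgraph]
    have := G.notMem_commonNeighbors_left u v
    have := G.notMem_commonNeighbors_right u v
    simp only [diamondSubgraph, Subgraph.deleteEdges_verts, Subgraph.induce_verts,
      Set.mem_ofPred_eq, Sym2.mem_iff] at hz'
    grind
  · rintro ⟨x, y, hxy, hcn⟩
    refine ⟨_, ⟨x, y, hxy, by simp [hcn], by simp [hcn], rfl⟩, ?_⟩
    rintro _ ⟨x', y', hxy', hx', hy', rfl⟩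
    rw [hcn] at hx' hy'
    congr 1
    simp only [Set.mem_insert_iff, Set.mem_singleton_iff] at hx' hy'
    rcases hx' with rfl | rfl <;> rcases hy' with rfl | rfl <;> simp_all [Sym2.eq_swap]

end

section

variable {V : Type*} [Fintype V] {G : SimpleGraph V} [DecidableRel G.Adj]

lemma card_commonNeighbors_eq_ncard (v w : V) :
    Fintype.card (G.commonNeighbors v w) = (G.commonNeighbors v w).ncard := by
  rw [← Nat.card_coe_set_eq, Nat.card_eq_fintype_card]

lemma cliqueFree_three_iff_card_commonNeighbors :
    G.CliqueFree 3 ↔ ∀ v w, G.Adj v w → Fintype.card (G.commonNeighbors v w) = 0 := by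
  simp only [Fintype.card_eq_zero_iff, Set.isEmpty_coe_sort, Set.eq_empty_iff_forall_notMem,
    mem_commonNeighbors]
  refine ⟨fun hG v w hvw z ⟨hvz, hwz⟩ ↦ hG.not_adj_of_adj_of_adj hvw hvz hwz, ?_⟩
  classical
  intro h t ht
  obtain ⟨a, b, c, hab, hac, hbc, rfl⟩ := is3Clique_iff.mp ht
  exact h a b hab c ⟨hac, hbc⟩

variable {μ : ℕ}

lemma card_filter_adj_erase_neighborFinset [DecidableEq V] (hG : G.CliqueFree 3)
    (hμ : Pairwise fun v w ↦ ¬G.Adj v w → Fintype.card (G.commonNeighbors v w) = μ)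
    {p q x : V} (hpq : G.Adj p q) (hx : x ∈ (G.neighborFinset p).erase q) :
    (((G.neighborFinset q).erase p).filter (G.Adj x)).card = μ - 1 := by
  obtain ⟨hxq, hpx⟩ := Finset.mem_erase.mp hx
  rw [mem_neighborFinset] at hpx
  have hcn : ((G.neighborFinset q).erase p).filter (G.Adj x) =
      (G.commonNeighbors x q).toFinset.erase p := by
    ext z
    simp [mem_commonNeighbors, and_comm, and_assoc]
  rw [hcn, Finset.card_erase_of_mem (by simp [mem_commonNeighbors, hpx.symm, hpq.symm]),
    Set.toFinset_card, hμ hxq (hG.not_adj_of_adj_of_adj hpx hpq)]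

lemma degree_eq_of_adj (hG : G.CliqueFree 3)
    (hμ : Pairwise fun v w ↦ ¬G.Adj v w → Fintype.card (G.commonNeighbors v w) = μ)
    (h2 : 2 ≤ μ) {p q : V} (hpq : G.Adj p q) : G.degree p = G.degree q := by
  classical
  have hcount := Finset.card_mul_eq_card_mul G.Adj
    (fun x hx ↦ card_filter_adj_erase_neighborFinset hG hμ hpq hx)
    (fun y hy ↦ by
      simpa only [Finset.bipartiteBelow, adj_comm] using
        card_filter_adj_erase_neighborFinset hG hμ hpq.symm hy)
  rw [Finset.card_erase_of_mem (by simpa using hpq),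
    Finset.card_erase_of_mem (by simpa using hpq.symm), card_neighborFinset_eq_degree,
    card_neighborFinset_eq_degree] at hcount
  have := Nat.eq_of_mul_eq_mul_right (by omega) hcount
  have := G.degree_pos_iff_exists_adj p |>.mpr ⟨q, hpq⟩
  have := G.degree_pos_iff_exists_adj q |>.mpr ⟨p, hpq.symm⟩
  omega

lemma exists_isRegularOfDegree (hG : G.CliqueFree 3)
    (hμ : Pairwise fun v w ↦ ¬G.Adj v w → Fintype.card (G.commonNeighbors v w) = μ)
    (h2 : 2 ≤ μ) : ∃ k, G.IsRegularOfDegree k := by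
  rcases isEmpty_or_nonempty V with hV | ⟨⟨w⟩⟩
  · exact ⟨0, fun v ↦ hV.elim v⟩
  refine ⟨G.degree w, fun v ↦ ?_⟩
  by_cases hvw : v = w
  · rw [hvw]
  by_cases hadj : G.Adj v w
  · exact degree_eq_of_adj hG hμ h2 hadj
  obtain ⟨⟨z, hz⟩⟩ : Nonempty (G.commonNeighbors v w) :=
    Fintype.card_pos_iff.mp (by rw [hμ hvw hadj]; omega)
  rw [mem_commonNeighbors] at hz
  exact (degree_eq_of_adj hG hμ h2 hz.1).trans (degree_eq_of_adj hG hμ h2 hz.2).symm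

end

end SimpleGraph

theorem stmt4 {V : Type*} [Fintype V] (G : SimpleGraph V) [DecidableRel G.Adj] :
    (UniquelySaturated diamond G ∧ G.girth = 4) ↔
      (∃ k : ℕ, G.IsSRGWith (Fintype.card V) k 0 2 ∧ G ≠ ⊤ ∧ G ≠ ⊥) := by
  constructor
  · rintro ⟨⟨-, hsat⟩, hgirth⟩
    have hG := cliqueFree_three_of_four_le_girth hgirth.ge
    have hμ : Pairwise fun v w ↦ ¬G.Adj v w → Fintype.card (G.commonNeighbors v w) = 2 :=
      fun v w hvw hnadj ↦ by
        rw [card_commonNeighbors_eq_ncard,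
          ← hG.existsUnique_isCopy_diamond_sup_edge_iff hvw]
        exact hsat v w hvw hnadj
    have hcyc : ¬G.IsAcyclic := by rw [← girth_eq_zero]; omega
    obtain ⟨k, hk⟩ := exists_isRegularOfDegree hG hμ le_rfl
    refine ⟨k, ⟨rfl, hk, cliqueFree_three_iff_card_commonNeighbors.mp hG, hμ⟩,
      ne_top_of_cliqueFree_three hG hcyc, ?_⟩
    rintro rfl
    simp at hgirth
  · rintro ⟨k, hsrg, hntop, -⟩
    have hG := cliqueFree_three_iff_card_commonNeighbors.mpr hsrg.of_adj
    have hμ {v w : V} (hvw : v ≠ w) (hnadj : ¬G.Adj v w) :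
        (G.commonNeighbors v w).ncard = 2 := by
      rw [← card_commonNeighbors_eq_ncard]
      exact hsrg.of_not_adj hvw hnadj
    refine ⟨⟨hG.not_isCopy_diamond, fun v w hvw hnadj ↦
      (hG.existsUnique_isCopy_diamond_sup_edge_iff hvw).mpr (hμ hvw hnadj)⟩, ?_⟩
    obtain ⟨u, v, huv, hnadj⟩ : ∃ u v, u ≠ v ∧ ¬G.Adj u v := by
      by_contra! h
      exact hntop (eq_top_iff.mpr fun u v huv ↦ h u v huv)
    obtain ⟨x, y, hxy, hcn⟩ := Set.ncard_eq_two.mp (hμ huv hnadj)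
    have hx : x ∈ G.commonNeighbors u v := by simp [hcn]
    have hy : y ∈ G.commonNeighbors u v := by simp [hcn]
    rw [mem_commonNeighbors] at hx hy
    obtain ⟨w, hw, hl⟩ := exists_isCycle_length_four hx.1 hx.2.symm hy.2 hy.1.symm huv hxy
    exact girth_eq_four hG hw hl
end

section
/- Let G be a nontrivial uniquely C4+-saturated graph with girth 3, and let S be the vertex set of a triangle in G. If every vertex of G is in S or adjacent to a vertex of S, then G is isomorphic to C3*, the graph consisting of a triangle with one pendant edge attached. -/
/-!
A vertex outside the triangle `S` with two neighbours in `S` would span a diamond with `S`. If two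
vertices `x, y` outside `S` were adjacent, with `x ~ v ∈ S` and `y` adjacent to `S`, then adding
an edge from `x` to a suitable second vertex `u ∈ S` would create two diamonds, one on `{x} ∪ S`
and one through `y`. So every vertex outside `S` has exactly one neighbour, and it lies in `S`.
Adding an edge between two such vertices creates no diamond, since every edge of a diamond meets
one of its two degree-`3` vertices while both ends of the new edge have degree `2`. Hence exactly
one vertex lies outside `S` (there is one since `|V| ≥ 4`), and `G` is `C₃*`.
-/

open SimpleGraph

/-- `C₃*`: a triangle with one pendant edge. -/
def C3star : SimpleGraph (Fin 4) :=
  SimpleGraph.fromEdgeSet {s(0, 1), s(0, 2), s(1, 2), s(2, 3)}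

instance : DecidableRel diamond.Adj := by unfold diamond; infer_instance

instance : DecidableRel C3star.Adj := by unfold C3star; infer_instance

section

variable {W V : Type*} {H : SimpleGraph W} {G : SimpleGraph V} {u v w x y : V}

lemma UniquelySaturated.free (hG : UniquelySaturated H G) : H.Free G := by
  rw [Free, isContained_iff_exists_iso_subgraph]
  rintro ⟨G', ⟨e⟩⟩
  exact hG.1 G' ⟨e.symm⟩

lemma UniquelySaturated.isContained_sup_edge (hG : UniquelySaturated H G) (huv : u ≠ v)
    (h : ¬G.Adj u v) : H ⊑ G ⊔ edge u v := by
  obtain ⟨G', ⟨e⟩, -⟩ := hG.2 u v huv h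
  exact isContained_iff_exists_iso_subgraph.2 ⟨G', ⟨e.symm⟩⟩

lemma UniquelySaturated.range_eq (hG : UniquelySaturated H G) (huv : u ≠ v) (h : ¬G.Adj u v)
    (f g : Copy H (G ⊔ edge u v)) : Set.range f = Set.range g := by
  obtain ⟨G', -, huniq⟩ := hG.2 u v huv h
  have hfg := (huniq f.toSubgraph ⟨f.isoToSubgraph.symm⟩).trans
    (huniq g.toSubgraph ⟨g.isoToSubgraph.symm⟩).symm
  simpa using congrArg Subgraph.verts hfg

lemma exists_diamond_copy {a b c d : V} (hab : a ≠ b) (hac : G.Adj a c) (had : G.Adj a d)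
    (hbc : G.Adj b c) (hbd : G.Adj b d) (hcd : G.Adj c d) :
    ∃ f : Copy diamond G, Set.range f = {a, b, c, d} := by
  let f : diamond →g G := ⟨![a, b, c, d], fun {i j} h ↦ by
    revert h
    fin_cases i <;> fin_cases j <;>
      simp +decide [hac, had, hbc, hbd, hcd, hac.symm, had.symm, hbc.symm, hbd.symm, hcd.symm]⟩
  have hnon : ∀ i j : Fin 4, i ≠ j → ¬diamond.Adj i j → i = 0 ∧ j = 1 ∨ i = 1 ∧ j = 0 := by
    decide
  refine ⟨⟨f, fun i j hij ↦ ?_⟩, ?_⟩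
  · by_contra hne
    by_cases h : diamond.Adj i j
    · exact (f.map_adj h).ne hij
    · obtain ⟨rfl, rfl⟩ | ⟨rfl, rfl⟩ := hnon i j hne h
      exacts [hab hij, hab hij.symm]
  · change Set.range ![a, b, c, d] = _
    simp only [Matrix.range_cons, Matrix.range_empty, Set.union_empty, Set.singleton_union]

lemma not_adj_of_adj_of_triangle (hG : diamond.Free G) (huv : G.Adj u v) (huw : G.Adj u w)
    (hvw : G.Adj v w) (hxw : x ≠ w) (hxu : G.Adj x u) : ¬G.Adj x v := fun hxv ↦ by
  obtain ⟨f, -⟩ := exists_diamond_copy hxw hxu hxv huw.symm hvw.symm huv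
  exact hG ⟨f⟩

lemma SimpleGraph.IsNClique.exists_eq_triple_of_mem [DecidableEq V] {s : Finset V} {t : V}
    (hs : G.IsNClique 3 s) (ht : t ∈ s) :
    ∃ a b, G.Adj a b ∧ G.Adj a t ∧ G.Adj b t ∧ s = {a, b, t} := by
  obtain ⟨a, b, c, hab, hac, hbc, rfl⟩ := is3Clique_iff.1 hs
  simp only [Finset.mem_insert, Finset.mem_singleton] at ht
  rcases ht with rfl | rfl | rfl
  · exact ⟨b, c, hbc, hab.symm, hac.symm, by rw [Finset.insert_comm, Finset.pair_comm]⟩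
  · exact ⟨a, c, hac, hab, hbc.symm, by rw [Finset.pair_comm]⟩
  · exact ⟨a, b, hab, hac, hbc, rfl⟩

lemma eq_of_adj_of_is3Clique [DecidableEq V] {s : Finset V} (hG : diamond.Free G)
    (hs : G.IsNClique 3 s) (hx : x ∉ s) (hu : u ∈ s) (hv : v ∈ s) (hxu : G.Adj x u)
    (hxv : G.Adj x v) : u = v := by
  obtain ⟨a, b, hab, hau, hbu, rfl⟩ := hs.exists_eq_triple_of_mem hu
  simp only [Finset.mem_insert, Finset.mem_singleton, not_or] at hx hv
  rcases hv with rfl | rfl | rfl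
  · exact absurd hxv (not_adj_of_adj_of_triangle hG hau.symm hbu.symm hab hx.2.1 hxu)
  · exact absurd hxv (not_adj_of_adj_of_triangle hG hbu.symm hau.symm hab.symm hx.1 hxu)
  · rfl

lemma UniquelySaturated.not_adj_of_adj_triangle (hG : UniquelySaturated diamond G)
    (huv : G.Adj u v) (huw : G.Adj u w) (hvw : G.Adj v w) (hxu : x ≠ u) (hxw : x ≠ w)
    (hyu : y ≠ u) (hyv : y ≠ v) (hyw : y ≠ w) (hxv : G.Adj x v) (hy : G.Adj y u ∨ G.Adj y v) : ¬G.Adj x y := by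
  intro hxy
  have hnxu : ¬G.Adj x u := not_adj_of_adj_of_triangle hG.free huv.symm hvw huw hxw hxv
  have hxu' : (G ⊔ edge x u).Adj x u := Or.inr (by simp [edge_adj, hxu])
  have hxv' : (G ⊔ edge x u).Adj x v := Or.inl hxv
  have huv' : (G ⊔ edge x u).Adj u v := Or.inl huv
  obtain ⟨f, hf⟩ := exists_diamond_copy hxw hxu' hxv' (Or.inl huw.symm) (Or.inl hvw.symm) huv'
  obtain ⟨g, hg⟩ : ∃ g : Copy diamond (G ⊔ edge x u), y ∈ Set.range g := by
    rcases hy with hyu' | hyv'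
    · obtain ⟨g, hg⟩ := exists_diamond_copy hyv (Or.inl hxy.symm) (Or.inl hyu') hxv'.symm
        huv'.symm hxu'
      exact ⟨g, by simp [hg]⟩
    · obtain ⟨g, hg⟩ := exists_diamond_copy hyu (Or.inl hxy.symm) (Or.inl hyv') hxu'.symm
        huv' hxv'
      exact ⟨g, by simp [hg]⟩
  rw [← hG.range_eq hxu hnxu f g, hf] at hg
  simp only [Set.mem_insert_iff, Set.mem_singleton_iff] at hg
  rcases hg with rfl | rfl | rfl | rfl
  exacts [G.irrefl hxy, hyw rfl, hyu rfl, hyv rfl]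

lemma UniquelySaturated.not_adj_of_is3Clique [DecidableEq V] {s : Finset V} {t : V}
    (hG : UniquelySaturated diamond G) (hs : G.IsNClique 3 s) (hx : x ∉ s) (hy : y ∉ s)
    (hv : v ∈ s) (ht : t ∈ s) (hxv : G.Adj x v) (hyt : G.Adj y t) : ¬G.Adj x y := by
  obtain ⟨a, b, hab, hav, hbv, rfl⟩ := hs.exists_eq_triple_of_mem hv
  simp only [Finset.mem_insert, Finset.mem_singleton, not_or] at hx hy ht
  obtain ⟨hxa, hxb, -⟩ := hx
  obtain ⟨hya, hyb, hyv⟩ := hy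
  rcases ht with rfl | rfl | rfl
  · exact hG.not_adj_of_adj_triangle hav hab hbv.symm hxa hxb hya hyv hyb hxv (Or.inl hyt)
  · exact hG.not_adj_of_adj_triangle hbv hab.symm hav.symm hxb hxa hyb hyv hya hxv (Or.inl hyt)
  · exact hG.not_adj_of_adj_triangle hav hab hbv.symm hxa hxb hya hyv hyb hxv (Or.inr hyt)

lemma UniquelySaturated.exists_neighborSet_eq_singleton [DecidableEq V] {s : Finset V}
    (hG : UniquelySaturated diamond G) (hs : G.IsNClique 3 s)
    (hdom : ∀ y ∉ s, ∃ t ∈ s, G.Adj y t) (hx : x ∉ s) :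
    ∃ t ∈ s, G.neighborSet x = {t} := by
  obtain ⟨t, ht, hxt⟩ := hdom x hx
  refine ⟨t, ht, Set.eq_singleton_iff_unique_mem.2 ⟨hxt, fun p hxp ↦ ?_⟩⟩
  by_cases hp : p ∈ s
  · exact eq_of_adj_of_is3Clique hG.free hs hx hp ht hxp hxt
  · obtain ⟨t', ht', hpt'⟩ := hdom p hp
    exact absurd hxp (hG.not_adj_of_is3Clique hs hx hp ht ht' hxt hpt')

lemma neighborSet_sup_edge_subset :
    (G ⊔ edge x y).neighborSet x ⊆ insert y (G.neighborSet x) := by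
  rintro p (hp | hp)
  · exact Or.inr hp
  · rw [edge_adj] at hp
    obtain ⟨⟨-, rfl⟩ | ⟨rfl, rfl⟩, -⟩ := hp <;> exact Or.inl rfl

lemma SimpleGraph.Copy.diamond_apply_ne_of_neighborSet_subset (f : Copy diamond G)
    {p q z : V} (hz : G.neighborSet z ⊆ {p, q}) {i : Fin 4} (hi : 2 ≤ i) : f i ≠ z := by
  classical
  rintro rfl
  have hsub : (Finset.univ.erase i).map f.toEmbedding ⊆ {p, q} := by
    intro r hr
    obtain ⟨j, hj, rfl⟩ := Finset.mem_map.1 hr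
    change f j ∈ ({p, q} : Finset V)
    have hij : diamond.Adj i j := by
      have key : ∀ i j : Fin 4, 2 ≤ i → j ≠ i → diamond.Adj i j := by decide
      exact key i j hi (Finset.ne_of_mem_erase hj)
    simpa using hz (f.toHom.map_adj hij)
  have := (Finset.card_le_card hsub).trans Finset.card_le_two
  simp at this

lemma free_sup_edge (hG : diamond.Free G) {p q : V} (hx : G.neighborSet x ⊆ {p})
    (hy : G.neighborSet y ⊆ {q}) : diamond.Free (G ⊔ edge x y) := by
  rintro ⟨f⟩
  have hx' : (G ⊔ edge x y).neighborSet x ⊆ {y, p} :=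
    neighborSet_sup_edge_subset.trans (Set.insert_subset_insert hx)
  have hy' : (G ⊔ edge x y).neighborSet y ⊆ {x, q} := by
    rw [edge_comm]
    exact neighborSet_sup_edge_subset.trans (Set.insert_subset_insert hy)
  have hhub : ∀ i j : Fin 4, diamond.Adj i j → 2 ≤ i ∨ 2 ≤ j := by decide
  refine hG ⟨⟨⟨f, fun {i j} h ↦ ?_⟩, f.injective⟩⟩
  obtain hij | hij := f.toHom.map_adj h
  · exact hij
  · rw [edge_adj] at hij
    rcases hhub i j h with hk | hk
    · have := f.diamond_apply_ne_of_neighborSet_subset hx' hk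
      have := f.diamond_apply_ne_of_neighborSet_subset hy' hk
      tauto
    · have := f.diamond_apply_ne_of_neighborSet_subset hx' hk
      have := f.diamond_apply_ne_of_neighborSet_subset hy' hk
      tauto

lemma UniquelySaturated.eq_of_neighborSet_subset (hG : UniquelySaturated diamond G) {p q : V}
    (hx : G.neighborSet x ⊆ {p}) (hy : G.neighborSet y ⊆ {q}) (hxy : ¬G.Adj x y) : x = y := by
  by_contra hne
  exact free_sup_edge hG.free hx hy (hG.isContained_sup_edge hne hxy)

lemma nonempty_iso_c3star {a b t x : V} (hab : G.Adj a b) (hat : G.Adj a t) (hbt : G.Adj b t)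
    (hx : G.neighborSet x = {t}) (hcov : ∀ p, p = a ∨ p = b ∨ p = t ∨ p = x) :
    Nonempty (G ≃g C3star) := by
  have hxp (p : V) : G.Adj x p ↔ p = t := Set.ext_iff.1 hx p
  have hpx (p : V) : G.Adj p x ↔ p = t := (G.adj_comm p x).trans (hxp p)
  have hxa : x ≠ a := fun h ↦ hbt.ne ((hxp b).1 (h ▸ hab))
  have hxb : x ≠ b := fun h ↦ hat.ne ((hxp a).1 (h ▸ hab.symm))
  have hxt : x ≠ t := ((hxp t).2 rfl).ne
  let f : Fin 4 → V := ![a, b, t, x]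
  have hf : Function.Bijective f := by
    refine ⟨fun i j hij ↦ ?_, fun p ↦ ?_⟩
    · fin_cases i <;> fin_cases j <;>
        simp_all [f, hab.ne, hat.ne, hbt.ne, hab.ne', hat.ne', hbt.ne']
    · rcases hcov p with rfl | rfl | rfl | rfl
      exacts [⟨0, rfl⟩, ⟨1, rfl⟩, ⟨2, rfl⟩, ⟨3, rfl⟩]
  refine ⟨(⟨Equiv.ofBijective f hf, fun {i j} ↦ ?_⟩ : C3star ≃g G).symm⟩
  fin_cases i <;> fin_cases j <;>
    simp +decide [f, hab, hat, hbt, hab.symm, hat.symm, hbt.symm, hxp, hpx, hat.ne, hbt.ne]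

end

theorem stmt6_general {V : Type*} [Fintype V] (G : SimpleGraph V)
    (hcard : 4 ≤ Fintype.card V) (hsat : UniquelySaturated diamond G)
    (v1 v2 v3 : V) (h12 : G.Adj v1 v2) (h13 : G.Adj v1 v3) (h23 : G.Adj v2 v3)
    (hdom : ∀ v : V, v ∈ ({v1, v2, v3} : Set V) ∨ G.Adj v v1 ∨ G.Adj v v2 ∨ G.Adj v v3) :
    Nonempty (G ≃g C3star) := by
  classical
  set s : Finset V := {v1, v2, v3}
  have hs : G.IsNClique 3 s := is3Clique_triple_iff.2 ⟨h12, h13, h23⟩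
  have hdom' : ∀ y ∉ s, ∃ t ∈ s, G.Adj y t := fun y hy ↦ by
    simpa [s, hy] using (hdom y).resolve_left (by simpa [s] using hy)
  have hnbr (y : V) (hy : y ∉ s) := hsat.exists_neighborSet_eq_singleton hs hdom' hy
  obtain ⟨x, hx⟩ : ∃ x, x ∉ s := by
    by_contra! h
    have hcard3 := hs.card_eq
    rw [Finset.eq_univ_of_forall h, Finset.card_univ] at hcard3
    omega
  obtain ⟨t, ht, hxt⟩ := hnbr x hx
  have hout (y : V) (hy : y ∉ s) : y = x := by
    obtain ⟨t', ht', hyt'⟩ := hnbr y hy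
    refine hsat.eq_of_neighborSet_subset hyt'.subset hxt.subset fun hyx ↦ hx ?_
    rwa [← (Set.ext_iff.1 hyt' x).1 hyx] at ht'
  obtain ⟨a, b, hab, hat, hbt, hs_eq⟩ := hs.exists_eq_triple_of_mem ht
  refine nonempty_iso_c3star hab hat hbt hxt fun p ↦ ?_
  by_cases hp : p ∈ s
  · rw [hs_eq] at hp
    simp only [Finset.mem_insert, Finset.mem_singleton] at hp
    tauto
  · exact Or.inr (Or.inr (Or.inr (hout p hp)))

theorem stmt6 {V : Type*} [Fintype V] (G : SimpleGraph V)
    (hcard : 4 ≤ Fintype.card V) (hsat : UniquelySaturated diamond G)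
    (hgirth : G.girth = 3)
    (v1 v2 v3 : V) (h12 : G.Adj v1 v2) (h13 : G.Adj v1 v3) (h23 : G.Adj v2 v3)
    (hdom : ∀ v : V, v ∈ ({v1, v2, v3} : Set V) ∨ G.Adj v v1 ∨ G.Adj v v2 ∨ G.Adj v v3) :
    Nonempty (G ≃g C3star) :=
  stmt6_general G hcard hsat v1 v2 v3 h12 h13 h23 hdom
end
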